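/- Let D = S + R·M_w where 0 ≤ S < S_w, S = w(a) for some a ∈ 𝔽_q, R ≥ 0, and R + 1 ≤ n if S > 0 while R ≤ n if S = 0. Then: (1) diam_{d_w}(B_w(x, D)) = D for all x ∈ 𝔽_q^n; (2) B_w(x, D) is D-optimal for all x ∈ 𝔽_q^n; (3) every D-optimal set A equals B_w(x, D) for some x ∈ 𝔽_q^n; (4) B_w(0, D) is an 𝔽_q-linear subspace of 𝔽_q^n if and only if S = 0. Consequently, A*_{d_w}(D) = q^R if S = 0, and A*_{d_w}(D) = q^R · (1 + |w⁻¹([S]_w)|) if S > 0. -/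

import Mathlib

set_option linter.unusedSectionVars false

open scoped Classical

noncomputable section

variable {F : Type*} [Field F] [Fintype F]

def IsWeight (w : F → ℕ) : Prop :=
  (∀ a : F, w a = 0 ↔ a = 0) ∧ (∀ a : F, w (-a) = w a) ∧
    (∀ a b : F, w (a + b) ≤ w a + w b)

def Mw (w : F → ℕ) : ℕ := Finset.univ.sup w

def mw (w : F → ℕ) : ℕ := sInf {s | ∃ a : F, a ≠ 0 ∧ w a = s}

def rho {n : ℕ} (u : Fin n → F) : ℕ :=
  (Finset.univ.filter fun j => u j ≠ 0).sup fun j => (j : ℕ) + 1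

lemma rho_le {n : ℕ} (u : Fin n → F) : rho u ≤ n :=
  Finset.sup_le fun j _ => j.isLt

def chainWeight {n : ℕ} (w : F → ℕ) (u : Fin n → F) : ℕ :=
  if h : rho u = 0 then 0
  else w (u ⟨rho u - 1,
        lt_of_lt_of_le (Nat.sub_lt (Nat.pos_of_ne_zero h) Nat.one_pos) (rho_le u)⟩)
      + (rho u - 1) * Mw w

def dChain {n : ℕ} (w : F → ℕ) (u v : Fin n → F) : ℕ := chainWeight w (u - v)

def ballW {n : ℕ} (w : F → ℕ) (x : Fin n → F) (r : ℕ) : Finset (Fin n → F) :=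
  Finset.univ.filter fun v => dChain w x v ≤ r

def diamW {n : ℕ} (w : F → ℕ) (A : Finset (Fin n → F)) : ℕ :=
  (A ×ˢ A).sup fun p => dChain w p.1 p.2

def AstarW (w : F → ℕ) (n D : ℕ) : ℕ :=
  Finset.univ.sup fun A : Finset (Fin n → F) => if diamW w A ≤ D then A.card else 0

def winv (w : F → ℕ) (S : ℕ) : Finset F :=
  Finset.univ.filter fun a => a ≠ 0 ∧ w a ≤ S

def dP {n : ℕ} (C : Finset (Fin n → F)) : ℕ :=
  sInf {s | ∃ x ∈ C, ∃ y ∈ C, x ≠ y ∧ rho (x - y) = s}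

def dW {n : ℕ} (w : F → ℕ) (C : Finset (Fin n → F)) : ℕ :=
  sInf {s | ∃ x ∈ C, ∃ y ∈ C, x ≠ y ∧ dChain w x y = s}

def floorW (w : F → ℕ) (n D : ℕ) : ℕ :=
  (Finset.univ.filter fun u : Fin n → F => chainWeight w u < D).sup (chainWeight w)

def nonArch (w : F → ℕ) : Prop := ∀ a b : F, w (a + b) ≤ max (w a) (w b)

def Sw (w : F → ℕ) : ℕ :=
  if nonArch w then Mw w
  else sInf {s | ∃ a b : F, max (w a) (w b) < w (a - b) ∧ max (w a) (w b) = s}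

def WwCond (w : F → ℕ) (S : ℕ) (K : Finset F) : Prop :=
  (∀ a ∈ K, Sw w ≤ w a ∧ w a ≤ S) ∧
  (∀ a ∈ K, ∀ b : F, w b ≤ Sw w - 1 → w (a - b) ≤ S) ∧
  (∀ a ∈ K, ∀ b ∈ K, w (a - b) ≤ S)

def WwCard (w : F → ℕ) (S : ℕ) : ℕ :=
  Finset.univ.sup fun K : Finset F => if WwCond w S K then K.card else 0

def idealOf {n : ℕ} (P : PartialOrder (Fin n)) (u : Fin n → F) : Finset (Fin n) :=
  Finset.univ.filter fun j => ∃ i : Fin n, u i ≠ 0 ∧ P.le j i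

def maxOf {n : ℕ} (P : PartialOrder (Fin n)) (u : Fin n → F) : Finset (Fin n) :=
  (idealOf P u).filter fun j => ∀ k ∈ idealOf P u, P.le j k → j = k

def posetWeight {n : ℕ} (P : PartialOrder (Fin n)) (w : F → ℕ) (u : Fin n → F) : ℕ :=
  (∑ i ∈ maxOf P u, w (u i)) + Mw w * ((idealOf P u) \ (maxOf P u)).card

def dPoset {n : ℕ} (P : PartialOrder (Fin n)) (w : F → ℕ) (u v : Fin n → F) : ℕ :=
  posetWeight P w (u - v)

def ballP {n : ℕ} (P : PartialOrder (Fin n)) (w : F → ℕ) (x : Fin n → F) (r : ℕ) :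
    Finset (Fin n → F) :=
  Finset.univ.filter fun v => dPoset P w x v ≤ r

def diamP {n : ℕ} (P : PartialOrder (Fin n)) (w : F → ℕ) (A : Finset (Fin n → F)) : ℕ :=
  (A ×ˢ A).sup fun p => dPoset P w p.1 p.2

end

/-!
For `S < Sw w` the weight is ultrametric on `{a | w a ≤ S}`. Hence the chain ball of radius
`D = S + R * Mw w` around `0` is the product set of vectors that vanish beyond index `R` and
whose coordinate of index `R` has weight at most `S`, and this set is closed under subtraction.
So every ball has diameter at most `D`; a set of diameter at most `D` lies in the ball around any
of its points, and all balls have the same size, so the optimal sets are exactly the balls, and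
`A*` is the size of the product set. For `S > 0` the ball is not a subspace, since
scaling its coordinate of index `R` reaches elements of every weight.
-/

namespace IsWeight

variable {F : Type*} [Field F] [Fintype F] {w : F → ℕ}

lemma map_zero (hw : IsWeight w) : w 0 = 0 := (hw.1 0).2 rfl

lemma pos (hw : IsWeight w) {a : F} (ha : a ≠ 0) : 0 < w a :=
  Nat.pos_of_ne_zero fun h => ha ((hw.1 a).1 h)

end IsWeight

section Weight

variable {F : Type*} [Field F] [Fintype F] {w : F → ℕ}

lemma le_Mw (w : F → ℕ) (a : F) : w a ≤ Mw w := Finset.le_sup (Finset.mem_univ a)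

lemma exists_eq_Mw (w : F → ℕ) : ∃ a : F, w a = Mw w := by
  obtain ⟨a, -, ha⟩ := Finset.exists_mem_eq_sup Finset.univ Finset.univ_nonempty w
  exact ⟨a, ha.symm⟩

lemma IsWeight.Sw_le_Mw (hw : IsWeight w) : Sw w ≤ Mw w := by
  unfold Sw
  split_ifs with hna
  · exact le_rfl
  · obtain ⟨a, b, hab⟩ : ∃ a b : F, max (w a) (w b) < w (a + b) := by
      simpa [nonArch] using hna
    have hlt : max (w a) (w (-b)) < w (a - -b) := by rwa [hw.2.1, sub_neg_eq_add]
    refine (Nat.sInf_le ?_).trans (max_le (le_Mw w a) (le_Mw w (-b)))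
    exact ⟨a, -b, hlt, rfl⟩

lemma IsWeight.map_sub_le (hw : IsWeight w) {S : ℕ} (hS : S < Sw w) {a b : F}
    (ha : w a ≤ S) (hb : w b ≤ S) : w (a - b) ≤ S := by
  by_cases hna : nonArch w
  · have h := hna a (-b)
    rw [hw.2.1, ← sub_eq_add_neg] at h
    omega
  · by_contra! hlt
    have hmax : max (w a) (w b) < w (a - b) := (max_le ha hb).trans_lt hlt
    have : Sw w ≤ max (w a) (w b) := by
      rw [Sw, if_neg hna]
      exact Nat.sInf_le ⟨a, b, hmax, rfl⟩
    omega

lemma winv_zero (hw : IsWeight w) : winv w 0 = ∅ := by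
  ext a
  simp only [winv, Finset.mem_filter, Finset.mem_univ, true_and, Finset.notMem_empty,
    iff_false, not_and, Nat.le_zero]
  exact fun ha h => ha ((hw.1 a).1 h)

lemma card_filter_le (hw : IsWeight w) (S : ℕ) :
    (Finset.univ.filter fun a => w a ≤ S).card = 1 + (winv w S).card := by
  have h : winv w S = (Finset.univ.filter fun a => w a ≤ S).erase 0 := by
    ext a
    simp [winv]
  have h0 : (0 : F) ∈ Finset.univ.filter fun a => w a ≤ S := by simp [hw.map_zero]
  rw [h, ← Finset.card_erase_add_one h0, add_comm]

end Weight

lemma Finset.prod_range_ite_lt_eq {M : Type*} [CommMonoid M] {R n : ℕ} (hR : R < n) (a b : M) :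
    ∏ i ∈ Finset.range n, (if i < R then a else if i = R then b else 1) = a ^ R * b := by
  obtain ⟨k, rfl⟩ : ∃ k, n = R + 1 + k := ⟨n - (R + 1), by omega⟩
  rw [Finset.prod_range_add, Finset.prod_range_succ, if_neg (lt_irrefl R), if_pos rfl,
    Finset.prod_congr rfl fun i hi => if_pos (Finset.mem_range.1 hi), Finset.prod_const,
    Finset.card_range, Finset.prod_eq_one fun i _ => by rw [if_neg (by omega), if_neg (by omega)],
    mul_one]

lemma add_mul_le_add_mul_iff {a S j R M : ℕ} (ha : 0 < a) (haM : a ≤ M) (hSM : S ≤ M) :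
    a + j * M ≤ S + R * M ↔ j < R ∨ j = R ∧ a ≤ S := by
  rcases lt_trichotomy j R with hjR | rfl | hRj
  · have : (j + 1) * M ≤ R * M := Nat.mul_le_mul_right M hjR
    rw [add_mul] at this
    simp only [hjR, true_or, iff_true]
    omega
  · simp
  · have : (R + 1) * M ≤ j * M := Nat.mul_le_mul_right M hRj
    rw [add_mul] at this
    simp only [hRj.ne', hRj.not_gt, false_or, false_and, iff_false, not_le]
    omega

section ChainWeight

variable {F : Type*} [Field F] [Fintype F] {n : ℕ} {w : F → ℕ}

lemma chainWeight_zero (w : F → ℕ) : chainWeight w (0 : Fin n → F) = 0 := by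
  simp [chainWeight, rho]

lemma exists_leading_index {u : Fin n → F} (hu : u ≠ 0) :
    ∃ j, u j ≠ 0 ∧ ∀ k, j < k → u k = 0 := by
  have hs : (Finset.univ.filter fun j => u j ≠ 0).Nonempty := by
    by_contra! h
    exact hu (funext fun j => by simpa using Finset.filter_eq_empty_iff.1 h (Finset.mem_univ j))
  refine ⟨_, (Finset.mem_filter.1 (Finset.max'_mem _ hs)).2, fun k hk => ?_⟩
  by_contra huk
  exact hk.not_ge (Finset.le_max' _ k (by simpa using huk))

lemma chainWeight_eq_of_leading {u : Fin n → F} {j : Fin n} (hj : u j ≠ 0)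
    (htop : ∀ k, j < k → u k = 0) : chainWeight w u = w (u j) + j * Mw w := by
  have hrho : rho u = j + 1 := by
    refine le_antisymm (Finset.sup_le fun k hk => ?_)
      (Finset.le_sup (f := fun j : Fin n => (j : ℕ) + 1) (by simpa using hj))
    by_contra! hlt
    exact (Finset.mem_filter.1 hk).2 (htop k (by omega))
  rw [chainWeight, dif_neg (by omega)]
  simp only [hrho, add_tsub_cancel_right]

lemma chainWeight_single (j : Fin n) {a : F} (ha : a ≠ 0) :
    chainWeight w (Pi.single j a) = w a + j * Mw w := by
  simpa using chainWeight_eq_of_leading (w := w) (u := Pi.single j a) (j := j) (by simpa using ha)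
    fun k hk => by simp [hk.ne']

lemma chainWeight_neg (hw : IsWeight w) (u : Fin n → F) :
    chainWeight w (-u) = chainWeight w u := by
  rcases eq_or_ne u 0 with rfl | hu
  · rw [neg_zero]
  obtain ⟨j, hj, htop⟩ := exists_leading_index hu
  rw [chainWeight_eq_of_leading hj htop,
    chainWeight_eq_of_leading (u := -u) (neg_ne_zero.2 hj) fun k hk => by simp [htop k hk],
    Pi.neg_apply, hw.2.1]

end ChainWeight

section Ball

variable {F : Type*} [Field F] [Fintype F] {n : ℕ} {w : F → ℕ} {r : ℕ}

lemma mem_ballW {x v : Fin n → F} : v ∈ ballW w x r ↔ dChain w x v ≤ r := by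
  simp [ballW]

lemma self_mem_ballW (x : Fin n → F) : x ∈ ballW w x r := by
  simp [mem_ballW, dChain, chainWeight_zero]

lemma ballW_eq_map (x : Fin n → F) :
    ballW w x r =
      (Finset.univ.filter fun u => chainWeight w u ≤ r).map (Equiv.subLeft x).toEmbedding := by
  ext v
  simp [Finset.mem_map_equiv, mem_ballW, dChain, neg_add_eq_sub]

lemma card_ballW_eq (x y : Fin n → F) : (ballW w x r).card = (ballW w y r).card := by
  rw [ballW_eq_map, ballW_eq_map, Finset.card_map, Finset.card_map]

lemma dChain_le_diamW {A : Finset (Fin n → F)} {x y : Fin n → F} (hx : x ∈ A) (hy : y ∈ A) :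
    dChain w x y ≤ diamW w A := by
  unfold diamW
  exact Finset.le_sup (f := fun p : (Fin n → F) × (Fin n → F) => dChain w p.1 p.2)
    (b := (x, y)) (Finset.mem_product.2 ⟨hx, hy⟩)

lemma subset_ballW_of_diamW_le {A : Finset (Fin n → F)} {x : Fin n → F} (hx : x ∈ A)
    (hA : diamW w A ≤ r) : A ⊆ ballW w x r :=
  fun _ hy => mem_ballW.2 ((dChain_le_diamW hx hy).trans hA)

lemma diamW_ballW_le
    (hsub : ∀ u v : Fin n → F, chainWeight w u ≤ r → chainWeight w v ≤ r →
      chainWeight w (u - v) ≤ r) (x : Fin n → F) :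
    diamW w (ballW w x r) ≤ r := by
  refine Finset.sup_le fun p hp => ?_
  obtain ⟨hy, hz⟩ := Finset.mem_product.1 hp
  have h := hsub _ _ (mem_ballW.1 hz) (mem_ballW.1 hy)
  rwa [sub_sub_sub_cancel_left] at h

lemma le_diamW_ballW {u : Fin n → F} (hu : chainWeight w u = r) (x : Fin n → F) :
    r ≤ diamW w (ballW w x r) := by
  have hmem : x - u ∈ ballW w x r := mem_ballW.2 (by simp [dChain, hu])
  simpa [dChain, hu] using dChain_le_diamW (w := w) (self_mem_ballW x) hmem

lemma card_le_AstarW {A : Finset (Fin n → F)} (hA : diamW w A ≤ r) : A.card ≤ AstarW w n r :=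
  (if_pos hA).symm.le.trans <|
    Finset.le_sup (f := fun A => if diamW w A ≤ r then A.card else 0) (Finset.mem_univ A)

lemma AstarW_eq_card_ballW (hball : ∀ x : Fin n → F, diamW w (ballW w x r) ≤ r)
    (x : Fin n → F) : AstarW w n r = (ballW w x r).card := by
  refine le_antisymm (Finset.sup_le fun A _ => ?_) (card_le_AstarW (hball x))
  split_ifs with hA
  · rcases A.eq_empty_or_nonempty with rfl | ⟨y, hy⟩
    · simp
    · exact (Finset.card_le_card (subset_ballW_of_diamW_le hy hA)).trans (card_ballW_eq y x).le
  · exact Nat.zero_le _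

lemma exists_eq_ballW_of_card_eq_AstarW (hball : ∀ x : Fin n → F, diamW w (ballW w x r) ≤ r)
    {A : Finset (Fin n → F)} (hA : diamW w A ≤ r) (hcard : A.card = AstarW w n r) :
    ∃ x, A = ballW w x r := by
  obtain ⟨x, hx⟩ : A.Nonempty := by
    rw [← Finset.card_pos, hcard, AstarW_eq_card_ballW hball 0, Finset.card_pos]
    exact ⟨0, self_mem_ballW 0⟩
  refine ⟨x, Finset.eq_of_subset_of_card_le (subset_ballW_of_diamW_le hx hA) ?_⟩
  rw [hcard, AstarW_eq_card_ballW hball x]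

end Ball

section ChainBall

variable {F : Type*} [Field F] [Fintype F] {n : ℕ} {w : F → ℕ} {S R : ℕ}

/-- The values allowed in coordinate `j` of a vector of chain weight at most `S + R * Mw w`.
Indices start at `0`: coordinate `R` here is the paper's coordinate `R + 1`. -/
def ballCoord (w : F → ℕ) (S R : ℕ) (j : Fin n) : Finset F :=
  if (j : ℕ) < R then Finset.univ
  else if (j : ℕ) = R then Finset.univ.filter fun a => w a ≤ S else {0}

lemma mem_ballCoord {j : Fin n} {a : F} :
    a ∈ ballCoord w S R j ↔ (R < j → a = 0) ∧ ((j : ℕ) = R → w a ≤ S) := by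
  unfold ballCoord
  split_ifs with h₁ h₂
  · simpa using ⟨fun h => absurd h (by omega), fun h => absurd h (by omega)⟩
  · simp [h₂]
  · simp [h₂, show R < (j : ℕ) by omega]

lemma card_ballCoord (hw : IsWeight w) (j : Fin n) :
    (ballCoord w S R j).card =
      if (j : ℕ) < R then Fintype.card F
      else if (j : ℕ) = R then 1 + (winv w S).card else 1 := by
  unfold ballCoord
  split_ifs <;> simp [card_filter_le hw]

lemma chainWeight_le_iff_mem_piFinset (hw : IsWeight w) (hSM : S ≤ Mw w) {u : Fin n → F} :
    chainWeight w u ≤ S + R * Mw w ↔ u ∈ Fintype.piFinset (ballCoord w S R) := by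
  simp only [Fintype.mem_piFinset, mem_ballCoord]
  rcases eq_or_ne u 0 with rfl | hu
  · simp [chainWeight_zero, hw.map_zero]
  obtain ⟨j, hj, htop⟩ := exists_leading_index hu
  rw [chainWeight_eq_of_leading hj htop,
    add_mul_le_add_mul_iff (hw.pos hj) (le_Mw w _) hSM]
  constructor
  · intro h k
    refine ⟨fun hk => htop k (by omega), fun hk => ?_⟩
    rcases h with hjR | ⟨hjR, hwS⟩
    · rw [htop k (by omega), hw.map_zero]
      exact Nat.zero_le S
    · rwa [show k = j from Fin.ext (by omega)]
  · intro h
    rcases lt_trichotomy (j : ℕ) R with hjR | hjR | hRj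
    · exact Or.inl hjR
    · exact Or.inr ⟨hjR, (h j).2 hjR⟩
    · exact absurd ((h j).1 hRj) hj

lemma chainWeight_sub_le (hw : IsWeight w) (hS : S < Sw w) {u v : Fin n → F}
    (hu : chainWeight w u ≤ S + R * Mw w) (hv : chainWeight w v ≤ S + R * Mw w) :
    chainWeight w (u - v) ≤ S + R * Mw w := by
  have hSM := hS.le.trans hw.Sw_le_Mw
  rw [chainWeight_le_iff_mem_piFinset hw hSM, Fintype.mem_piFinset] at hu hv ⊢
  intro j
  have huj := mem_ballCoord.1 (hu j)
  have hvj := mem_ballCoord.1 (hv j)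
  exact mem_ballCoord.2 ⟨fun hj => by simp [huj.1 hj, hvj.1 hj],
    fun hj => hw.map_sub_le hS (huj.2 hj) (hvj.2 hj)⟩

lemma ballW_zero_eq_piFinset (hw : IsWeight w) (hSM : S ≤ Mw w) :
    ballW w (0 : Fin n → F) (S + R * Mw w) = Fintype.piFinset (ballCoord w S R) := by
  ext v
  rw [mem_ballW, dChain, zero_sub, chainWeight_neg hw, chainWeight_le_iff_mem_piFinset hw hSM]

lemma card_ballW (hw : IsWeight w) (hSM : S ≤ Mw w) (hR1 : 0 < S → R + 1 ≤ n)
    (hR0 : S = 0 → R ≤ n) (x : Fin n → F) :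
    (ballW w x (S + R * Mw w)).card = Fintype.card F ^ R * (1 + (winv w S).card) := by
  rw [card_ballW_eq x 0, ballW_zero_eq_piFinset hw hSM, Fintype.card_piFinset]
  simp_rw [card_ballCoord hw]
  rw [Fin.prod_univ_eq_prod_range (fun i => if i < R then Fintype.card F
    else if i = R then 1 + (winv w S).card else 1)]
  obtain hRn | ⟨rfl, rfl⟩ : R < n ∨ S = 0 ∧ R = n := by
    rcases Nat.eq_zero_or_pos S with hS0 | hSpos
    · exact (hR0 hS0).lt_or_eq.imp id fun h => ⟨hS0, h⟩
    · exact Or.inl (hR1 hSpos)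
  · exact Finset.prod_range_ite_lt_eq hRn _ _
  · rw [winv_zero hw, Finset.card_empty, add_zero, mul_one,
      Finset.prod_congr rfl fun i hi => if_pos (Finset.mem_range.1 hi), Finset.prod_const,
      Finset.card_range]

lemma exists_chainWeight_eq (hw : IsWeight w) (hSval : ∃ a, w a = S)
    (hR1 : 0 < S → R + 1 ≤ n) (hR0 : S = 0 → R ≤ n) :
    ∃ u : Fin n → F, chainWeight w u = S + R * Mw w := by
  obtain ⟨a, rfl⟩ := hSval
  rcases eq_or_ne a 0 with rfl | ha
  · rw [hw.map_zero, zero_add]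
    have hRn := hR0 hw.map_zero
    rcases R with _ | R
    · exact ⟨0, by simp [chainWeight_zero]⟩
    obtain ⟨b, hb⟩ := exists_eq_Mw w
    have hb0 : b ≠ 0 := by
      rintro rfl
      have := (hw.pos one_ne_zero).trans_le (le_Mw w 1)
      rw [← hb, hw.map_zero] at this
      exact this.false
    refine ⟨Pi.single ⟨R, by omega⟩ b, ?_⟩
    rw [chainWeight_single _ hb0, hb, Fin.val_mk]
    ring
  · exact ⟨Pi.single ⟨R, hR1 (hw.pos ha)⟩ a, chainWeight_single _ ha⟩

lemma coe_ballW_zero_eq_pi (hw : IsWeight w) (R : ℕ) :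
    (ballW w (0 : Fin n → F) (0 + R * Mw w) : Set (Fin n → F)) =
      (Submodule.pi Set.univ fun j : Fin n => if (j : ℕ) < R then ⊤ else (⊥ : Submodule F F) :
        Set (Fin n → F)) := by
  ext v
  rw [Finset.mem_coe, ballW_zero_eq_piFinset hw (Nat.zero_le _), Fintype.mem_piFinset,
    SetLike.mem_coe, Submodule.mem_pi]
  refine forall_congr' fun j => ?_
  rw [mem_ballCoord]
  split_ifs with hj
  · simpa using ⟨fun h => absurd h (by omega), fun h => absurd h (by omega)⟩
  · simp only [Set.mem_univ, true_imp_iff, Submodule.mem_bot, Nat.le_zero, hw.1]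
    rcases (not_lt.1 hj).lt_or_eq with hRj | hRj
    · simp [hRj, hRj.ne']
    · simp [hRj]

lemma not_exists_submodule_coe_eq_ballW_zero (hw : IsWeight w) (hS : S < Sw w)
    {a : F} (ha : w a = S) (hSpos : 0 < S) (hRn : R < n) :
    ¬∃ V : Submodule F (Fin n → F),
      (ballW w (0 : Fin n → F) (S + R * Mw w) : Set (Fin n → F)) = V := by
  rintro ⟨V, hV⟩
  have hmem : ∀ b : F, Pi.single (⟨R, hRn⟩ : Fin n) b ∈ V ↔ w b ≤ S := by
    intro b
    rw [← SetLike.mem_coe, ← hV, Finset.mem_coe,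
      ballW_zero_eq_piFinset hw (hS.le.trans hw.Sw_le_Mw), Fintype.mem_piFinset]
    refine ⟨fun h => by simpa using (mem_ballCoord.1 (h ⟨R, hRn⟩)).2 rfl, fun hb j => ?_⟩
    rcases eq_or_ne j ⟨R, hRn⟩ with rfl | hj
    · simpa [mem_ballCoord] using hb
    · simp [mem_ballCoord, hj, hw.map_zero]
  have ha0 : a ≠ 0 := by
    rintro rfl
    rw [hw.map_zero] at ha
    omega
  -- every `Pi.single R b` is a scalar multiple of `Pi.single R a`
  have hall : ∀ b : F, w b ≤ S := fun b => (hmem b).1 <| by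
    simpa [← Pi.single_smul', inv_mul_cancel_right₀ ha0] using
      V.smul_mem (b * a⁻¹) ((hmem a).2 ha.le)
  have hMS : Mw w ≤ S := Finset.sup_le fun b _ => hall b
  exact (hS.trans_le hw.Sw_le_Mw).not_ge hMS

lemma exists_submodule_coe_eq_ballW_zero_iff (hw : IsWeight w) (hSval : ∃ a, w a = S)
    (hS : S < Sw w) (hR1 : 0 < S → R + 1 ≤ n) :
    (∃ V : Submodule F (Fin n → F),
      (ballW w (0 : Fin n → F) (S + R * Mw w) : Set (Fin n → F)) = V) ↔ S = 0 := by
  refine ⟨fun hV => ?_, fun hS0 => ?_⟩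
  · by_contra hS0
    obtain ⟨a, ha⟩ := hSval
    have hSpos := Nat.pos_of_ne_zero hS0
    exact not_exists_submodule_coe_eq_ballW_zero hw hS ha hSpos (hR1 hSpos) hV
  · subst hS0
    exact ⟨_, coe_ballW_zero_eq_pi hw R⟩

end ChainBall

theorem stmt13_general {F : Type*} [Field F] [Fintype F] {n : ℕ}
    (w : F → ℕ) (hw : IsWeight w) (S R : ℕ)
    (hSval : ∃ a : F, w a = S) (hS : S < Sw w)
    (hR1 : 0 < S → R + 1 ≤ n) (hR0 : S = 0 → R ≤ n) :
    (∀ x : Fin n → F, diamW w (ballW w x (S + R * Mw w)) = S + R * Mw w) ∧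
    (∀ x : Fin n → F, diamW w (ballW w x (S + R * Mw w)) ≤ S + R * Mw w ∧
        (ballW w x (S + R * Mw w)).card = AstarW w n (S + R * Mw w)) ∧
    (∀ A : Finset (Fin n → F), diamW w A ≤ S + R * Mw w →
        A.card = AstarW w n (S + R * Mw w) →
        ∃ x : Fin n → F, A = ballW w x (S + R * Mw w)) ∧
    ((∃ V : Submodule F (Fin n → F),
        ((ballW w (0 : Fin n → F) (S + R * Mw w) : Finset (Fin n → F)) : Set (Fin n → F)) =
          (V : Set (Fin n → F))) ↔ S = 0) ∧
    (S = 0 → AstarW w n (S + R * Mw w) = Fintype.card F ^ R) ∧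
    (0 < S → AstarW w n (S + R * Mw w) =
        Fintype.card F ^ R * (1 + (winv w S).card)) := by
  have hSM : S ≤ Mw w := hS.le.trans hw.Sw_le_Mw
  have hdiam : ∀ x : Fin n → F, diamW w (ballW w x (S + R * Mw w)) ≤ S + R * Mw w :=
    diamW_ballW_le fun _ _ => chainWeight_sub_le hw hS
  have hAstar := AstarW_eq_card_ballW hdiam
  have hcard : AstarW w n (S + R * Mw w) = Fintype.card F ^ R * (1 + (winv w S).card) :=
    (hAstar 0).trans (card_ballW hw hSM hR1 hR0 0)
  obtain ⟨u, hu⟩ := exists_chainWeight_eq hw hSval hR1 hR0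
  refine ⟨fun x => (hdiam x).antisymm (le_diamW_ballW hu x),
    fun x => ⟨hdiam x, (hAstar x).symm⟩,
    fun A hA hAc => exists_eq_ballW_of_card_eq_AstarW hdiam hA hAc,
    exists_submodule_coe_eq_ballW_zero_iff hw hSval hS hR1, fun hS0 => ?_, fun _ => hcard⟩
  rw [hcard, hS0, winv_zero hw, Finset.card_empty, add_zero, mul_one]

theorem stmt13 {F : Type*} [Field F] [Fintype F] {n : ℕ} (hn : 1 ≤ n)
    (w : F → ℕ) (hw : IsWeight w) (S R : ℕ)
    (hSval : ∃ a : F, w a = S) (hS : S < Sw w)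
    (hR1 : 0 < S → R + 1 ≤ n) (hR0 : S = 0 → R ≤ n) :
    (∀ x : Fin n → F, diamW w (ballW w x (S + R * Mw w)) = S + R * Mw w) ∧
    (∀ x : Fin n → F, diamW w (ballW w x (S + R * Mw w)) ≤ S + R * Mw w ∧
        (ballW w x (S + R * Mw w)).card = AstarW w n (S + R * Mw w)) ∧
    (∀ A : Finset (Fin n → F), diamW w A ≤ S + R * Mw w →
        A.card = AstarW w n (S + R * Mw w) →
        ∃ x : Fin n → F, A = ballW w x (S + R * Mw w)) ∧
    ((∃ V : Submodule F (Fin n → F),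
        ((ballW w (0 : Fin n → F) (S + R * Mw w) : Finset (Fin n → F)) : Set (Fin n → F)) =
          (V : Set (Fin n → F))) ↔ S = 0) ∧
    (S = 0 → AstarW w n (S + R * Mw w) = Fintype.card F ^ R) ∧
    (0 < S → AstarW w n (S + R * Mw w) =
        Fintype.card F ^ R * (1 + (winv w S).card)) :=
  stmt13_general w hw S R hSval hS hR1 hR0
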